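/- Let S be a commutative ring, A an Azumaya algebra over S, and M a right A-module. Then M is finitely generated projective as a right A-module if and only if M is finitely generated projective as an S-module (via restriction of scalars along S → A). -/

import Mathlib

/-!
Going down, `M` is a direct summand of a free `Aᵐᵒᵖ`-module, and `A` is finitely generated
projective over `S`. Going up, the point is that `Aᵐᵒᵖ` is a separable `S`-algebra. Since `A` is
faithful, finitely generated and projective, its trace ideal is all of `S` (Nakayama), which gives
a linear form `t : A → S` with `t 1 = 1`. The endomorphism `x ↦ t x • 1` has central values, so
its preimage under the Azumaya isomorphism is a separability idempotent `e` of `Aᵐᵒᵖ`, and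
`m ↦ e • m` splits the action map `Aᵐᵒᵖ ⊗[S] M → M` as a map of `Aᵐᵒᵖ`-modules. Hence `M` is a
direct summand of `Aᵐᵒᵖ ⊗[S] M`, which is `Aᵐᵒᵖ`-projective because `M` is `S`-projective.
-/

open TensorProduct

variable (S : Type*) [CommRing S] (A : Type*) [Ring A] [Algebra S A]

/-- The natural map `A ⊗[S] Aᵐᵒᵖ → End_S(A)`, `a ⊗ b ↦ (x ↦ a * x * b.unop)`. -/
noncomputable def azumayaMap : A ⊗[S] Aᵐᵒᵖ →ₗ[S] Module.End S A :=
  TensorProduct.lift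
    (LinearMap.mk₂ S
      (fun a b => (LinearMap.mulRight S b.unop).comp (LinearMap.mulLeft S a))
      (fun a a' b => by ext x; simp [add_mul])
      (fun s a b => by ext x; simp [smul_mul_assoc])
      (fun a b b' => by ext x; simp [mul_add])
      (fun s a b => by ext x; simp [mul_smul_comm]))

/-- An Azumaya algebra over a commutative ring `S` is an `S`-algebra `A` that is finitely
generated projective and faithful as an `S`-module and such that the natural map
`A ⊗_S Aᵒᵖ → End_S(A)`, `a ⊗ b ↦ (x ↦ a x b)`, is an isomorphism. -/
structure IsAzumayaAlg : Prop where
  finite : Module.Finite S A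
  projective : Module.Projective S A
  faithful : FaithfulSMul S A
  bijective : Function.Bijective (azumayaMap S A)

theorem Module.Projective.trans {R : Type*} (B : Type*) {M : Type*} [CommSemiring R] [Semiring B]
    [Algebra R B] [AddCommMonoid M] [Module R M] [Module B M] [IsScalarTower R B M]
    [Projective R B] [Projective B M] : Projective R M := by
  classical
  obtain ⟨s, hs⟩ := projective_def'.mp (inferInstance : Projective B M)
  have : Projective R (M →₀ B) := .of_equiv (finsuppLequivDFinsupp R).symm
  exact .of_split (s.restrictScalars R) ((Finsupp.linearCombination B id).restrictScalars R)
    (LinearMap.ext fun m => LinearMap.congr_fun hs m)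

namespace Module

variable (R P : Type*) [CommRing R] [AddCommGroup P] [Module R P]

def traceIdeal : Ideal R := ⨆ φ : Dual R P, LinearMap.range φ

variable {R P}

lemma apply_mem_traceIdeal (φ : Dual R P) (p : P) : φ p ∈ traceIdeal R P :=
  Submodule.mem_iSup_of_mem φ (LinearMap.mem_range_self φ p)

lemma top_le_traceIdeal_smul_top [Projective R P] :
    (⊤ : Submodule R P) ≤ traceIdeal R P • ⊤ := by
  obtain ⟨s, hs⟩ := projective_def'.mp (inferInstance : Projective R P)
  intro p _
  rw [← LinearMap.id_apply (R := R) p, ← hs, LinearMap.comp_apply,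
    Finsupp.linearCombination_apply]
  exact Submodule.sum_mem _ fun q _ =>
    Submodule.smul_mem_smul (apply_mem_traceIdeal (Finsupp.lapply q ∘ₗ s) p) Submodule.mem_top

theorem traceIdeal_eq_top [Module.Finite R P] [Projective R P] [FaithfulSMul R P] :
    traceIdeal R P = ⊤ := by
  obtain ⟨r, hr, hr_smul⟩ := Submodule.exists_sub_one_mem_and_smul_eq_zero_of_fg_of_le_smul
    (traceIdeal R P) ⊤ Module.Finite.fg_top top_le_traceIdeal_smul_top
  obtain rfl : r = 0 :=
    FaithfulSMul.eq_of_smul_eq_smul fun p => by rw [hr_smul p trivial, zero_smul]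
  rw [Ideal.eq_top_iff_one, ← neg_mem_iff]
  simpa using hr

theorem exists_dual_apply_one_eq_one (A : Type*) [Ring A] [Algebra R A] [Module.Finite R A]
    [Projective R A] [FaithfulSMul R A] : ∃ t : Dual R A, t 1 = 1 := by
  have : traceIdeal R A ≤ LinearMap.range (LinearMap.applyₗ (R := R) (1 : A)) :=
    iSup_le fun φ => by
      rintro _ ⟨a, rfl⟩
      exact ⟨φ ∘ₗ LinearMap.mulLeft R a, by simp⟩
  simpa using this (traceIdeal_eq_top (R := R) (P := A) ▸ Submodule.mem_top)

end Module

section Separable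

variable (R : Type*) [CommRing R] {B : Type*} [Ring B] [Algebra R B]

structure IsSeparabilityIdempotent (e : B ⊗[R] B) : Prop where
  mul'_eq_one : LinearMap.mul' R B e = 1
  tmul_one_mul_eq_mul_one_tmul : ∀ b : B, (b ⊗ₜ[R] 1) * e = e * (1 ⊗ₜ b)

variable (B) (M : Type*) [AddCommGroup M] [Module R M] [Module B M] [IsScalarTower R B M]

noncomputable def tensorSMul : B ⊗[R] M →ₗ[B] M :=
  AlgebraTensorModule.lift (LinearMap.toSpanSingleton B (M →ₗ[R] M) LinearMap.id)

@[simp] lemma tensorSMul_tmul (b : B) (m : M) : tensorSMul R B M (b ⊗ₜ m) = b • m := rfl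

variable {R B M}

noncomputable def tensorSMulRight (m : M) : B ⊗[R] B →ₗ[R] B ⊗[R] M :=
  LinearMap.lTensor B ((LinearMap.toSpanSingleton B M m).restrictScalars R)

@[simp] lemma tensorSMulRight_tmul (m : M) (b b' : B) :
    tensorSMulRight m (b ⊗ₜ[R] b') = b ⊗ₜ (b' • m) := rfl

lemma tensorSMulRight_add (m m' : M) (z : B ⊗[R] B) :
    tensorSMulRight (m + m') z = tensorSMulRight m z + tensorSMulRight m' z := by
  induction z using TensorProduct.induction_on with
  | zero => simp
  | tmul a b => simp [tmul_add]
  | add u v hu hv => simp only [map_add, hu, hv]; abel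

lemma tensorSMulRight_smul (c : B) (m : M) (z : B ⊗[R] B) :
    tensorSMulRight (c • m) z = tensorSMulRight m (z * (1 ⊗ₜ c)) := by
  induction z using TensorProduct.induction_on with
  | zero => simp
  | tmul a b => simp [mul_smul]
  | add u v hu hv => simp [add_mul, hu, hv]

lemma smul_tensorSMulRight (c : B) (m : M) (z : B ⊗[R] B) :
    c • tensorSMulRight m z = tensorSMulRight m ((c ⊗ₜ 1) * z) := by
  induction z using TensorProduct.induction_on with
  | zero => simp
  | tmul a b => simp [smul_tmul']
  | add u v hu hv => simp [mul_add, hu, hv]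

lemma tensorSMul_tensorSMulRight (m : M) (z : B ⊗[R] B) :
    tensorSMul R B M (tensorSMulRight m z) = LinearMap.mul' R B z • m := by
  induction z using TensorProduct.induction_on with
  | zero => simp
  | tmul a b => simp [mul_smul]
  | add u v hu hv => simp [add_smul, hu, hv]

theorem Module.Projective.of_isSeparabilityIdempotent {e : B ⊗[R] B}
    (he : IsSeparabilityIdempotent R e) [Module.Projective R M] : Module.Projective B M := by
  let σ : M →ₗ[B] B ⊗[R] M :=
    { toFun := fun m => tensorSMulRight m e
      map_add' := fun m m' => tensorSMulRight_add m m' e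
      map_smul' := fun c m => by
        rw [RingHom.id_apply, tensorSMulRight_smul, smul_tensorSMulRight,
          he.tmul_one_mul_eq_mul_one_tmul] }
  refine .of_split σ (tensorSMul R B M) (LinearMap.ext fun m => ?_)
  simp [σ, tensorSMul_tensorSMulRight, he.mul'_eq_one]

end Separable

section AzumayaOp

noncomputable def azumayaMapOp : Aᵐᵒᵖ ⊗[S] Aᵐᵒᵖ →ₗ[S] Module.End S A :=
  azumayaMap S A ∘ₗ
    (TensorProduct.comm S Aᵐᵒᵖ Aᵐᵒᵖ ≪≫ₗ
      TensorProduct.congr (MulOpposite.opLinearEquiv S).symm (LinearEquiv.refl S Aᵐᵒᵖ)).toLinearMap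

variable {S A}

@[simp] lemma azumayaMapOp_tmul (b b' : Aᵐᵒᵖ) (x : A) :
    azumayaMapOp S A (b ⊗ₜ b') x = b'.unop * x * b.unop := rfl

lemma azumayaMapOp_apply_one (z : Aᵐᵒᵖ ⊗[S] Aᵐᵒᵖ) :
    azumayaMapOp S A z 1 = (LinearMap.mul' S Aᵐᵒᵖ z).unop := by
  induction z using TensorProduct.induction_on with
  | zero => simp
  | tmul a b => simp
  | add u v hu hv => simp [hu, hv]

lemma azumayaMapOp_tmul_one_mul (c : Aᵐᵒᵖ) (z : Aᵐᵒᵖ ⊗[S] Aᵐᵒᵖ) :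
    azumayaMapOp S A ((c ⊗ₜ 1) * z) = LinearMap.mulRight S c.unop ∘ₗ azumayaMapOp S A z := by
  induction z using TensorProduct.induction_on with
  | zero => simp
  | tmul a b => ext x; simp [mul_assoc]
  | add u v hu hv => simp [mul_add, hu, hv, LinearMap.comp_add]

lemma azumayaMapOp_mul_one_tmul (c : Aᵐᵒᵖ) (z : Aᵐᵒᵖ ⊗[S] Aᵐᵒᵖ) :
    azumayaMapOp S A (z * (1 ⊗ₜ c)) = LinearMap.mulLeft S c.unop ∘ₗ azumayaMapOp S A z := by
  induction z using TensorProduct.induction_on with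
  | zero => simp
  | tmul a b => ext x; simp [mul_assoc]
  | add u v hu hv => simp [add_mul, hu, hv, LinearMap.comp_add]

theorem IsAzumayaAlg.exists_isSeparabilityIdempotent_op (hA : IsAzumayaAlg S A) :
    ∃ e : Aᵐᵒᵖ ⊗[S] Aᵐᵒᵖ, IsSeparabilityIdempotent S e := by
  have := hA.finite; have := hA.projective; have := hA.faithful
  obtain ⟨t, ht⟩ := Module.exists_dual_apply_one_eq_one (R := S) A
  have hbij : Function.Bijective (azumayaMapOp S A) := hA.bijective.comp (LinearEquiv.bijective _)
  obtain ⟨e, he⟩ := hbij.surjective (Algebra.linearMap S A ∘ₗ t)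
  refine ⟨e, ⟨MulOpposite.unop_injective ?_, fun c => hbij.injective ?_⟩⟩
  · simp [← azumayaMapOp_apply_one, he, ht]
  · rw [azumayaMapOp_tmul_one_mul, azumayaMapOp_mul_one_tmul, he]
    ext x
    exact Algebra.commutes (t x) c.unop

end AzumayaOp

theorem finite_projective_over_azumaya_iff_over_base
    (hA : IsAzumayaAlg S A) (M : Type*) [AddCommGroup M]
    [Module S M] [Module Aᵐᵒᵖ M] [IsScalarTower S Aᵐᵒᵖ M] :
    (Module.Finite Aᵐᵒᵖ M ∧ Module.Projective Aᵐᵒᵖ M) ↔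
      (Module.Finite S M ∧ Module.Projective S M) := by
  have := hA.finite
  have := hA.projective
  have : Module.Finite S Aᵐᵒᵖ := .equiv (MulOpposite.opLinearEquiv S)
  have : Module.Projective S Aᵐᵒᵖ := .of_equiv (MulOpposite.opLinearEquiv S)
  obtain ⟨e, he⟩ := hA.exists_isSeparabilityIdempotent_op
  constructor
  · rintro ⟨_, _⟩
    exact ⟨.trans Aᵐᵒᵖ M, .trans Aᵐᵒᵖ⟩
  · rintro ⟨_, _⟩
    exact ⟨.of_restrictScalars_finite S Aᵐᵒᵖ M, .of_isSeparabilityIdempotent he⟩
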